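/- arXiv:1902.04742 — 4 statements merged into one kernel-verified Lean document; each statement's English description precedes it below -/
import Mathlib

section
/- In the linear setup, for any ε > 0 and δ ∈ (0, 1/4], suppose D ≥ 32·ln(6m/δ), D ≥ 1152·m·ln(6m/δ), and D ≥ 2304·m·ln(2/ε). Then for every γ ∈ [0,1], the generalization error of the algorithm with respect to the ramp loss L^(γ) satisfies ε_gen(m,δ) ≤ ε. -/
open MeasureTheory ProbabilityTheory
open scoped ENNReal NNReal

noncomputable section

namespace LinearExample

/-- Euclidean dot product on `Fin n → ℝ`. -/
def dotp {n : ℕ} (v w : Fin n → ℝ) : ℝ := ∑ i, v i * w i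

/-- An example: an input `(x₁, x₂) ∈ ℝ^K × ℝ^D` together with a real label. -/
abbrev Ex (K D : ℕ) := ((Fin K → ℝ) × (Fin D → ℝ)) × ℝ

/-- The noise distribution: `D` i.i.d. coordinates, each `N(0, 32/D)`. -/
def noise (D : ℕ) : Measure (Fin D → ℝ) :=
  Measure.pi fun _ => gaussianReal 0 (32 / D)

/-- The data distribution `𝒟`: label `y` uniform on `{-1,1}`; given `y`,
`x₁ = 2·y·u` and `x₂ ~ N(0, (32/D)·I)`. -/
def μD (K D : ℕ) (u : Fin K → ℝ) : Measure (Ex K D) :=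
  (1/2 : ℝ≥0∞) • (noise D).map (fun x₂ => (((2 : ℝ) • u, x₂), (1 : ℝ))) +
  (1/2 : ℝ≥0∞) • (noise D).map (fun x₂ => (((-2 : ℝ) • u, x₂), (-1 : ℝ)))

/-- Distribution of an i.i.d. `m`-sample from `𝒟`. -/
def μS (K D m : ℕ) (u : Fin K → ℝ) : Measure (Fin m → Ex K D) :=
  Measure.pi fun _ => μD K D u

/-- The classifier learned on `S`: `h_S(x₁,x₂) = w₁·x₁ + w₂·x₂` with
`w₁ = 2m·u` and `w₂ = Σᵢ y⁽ⁱ⁾·x₂⁽ⁱ⁾`. -/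
def alg (K D m : ℕ) (u : Fin K → ℝ) (S : Fin m → Ex K D) :
    (Fin K → ℝ) × (Fin D → ℝ) → ℝ :=
  fun x => dotp ((2 * (m : ℝ)) • u) x.1 + dotp (∑ i, (S i).2 • (S i).1.2) x.2

/-- The ramp loss `L^{(γ)}`. -/
def ramp (γ y' y : ℝ) : ℝ :=
  if y * y' ≤ 0 then 1 else if γ ≤ y * y' then 0 else 1 - y * y' / γ

/-- Expected (test) loss of a hypothesis. -/
def testLoss (K D : ℕ) (u : Fin K → ℝ) (γ : ℝ)
    (h : (Fin K → ℝ) × (Fin D → ℝ) → ℝ) : ℝ :=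
  ∫ z, ramp γ (h z.1) z.2 ∂(μD K D u)

/-- Empirical loss of a hypothesis on a sample `S`. -/
def empLoss (K D m : ℕ) (γ : ℝ) (h : (Fin K → ℝ) × (Fin D → ℝ) → ℝ)
    (S : Fin m → Ex K D) : ℝ :=
  (1 / (m : ℝ)) * ∑ i, ramp γ (h (S i).1) (S i).2

/-- The generalization error `ε_gen(m,δ)` of the algorithm w.r.t. `L^{(γ)}`. -/
def genErr (K D m : ℕ) (u : Fin K → ℝ) (γ δ : ℝ) : ℝ :=
  sInf {ε : ℝ | 0 ≤ ε ∧
    ENNReal.ofReal (1 - δ) ≤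
      μS K D m u {S | testLoss K D u γ (alg K D m u S)
        - empLoss K D m γ (alg K D m u S) S ≤ ε}}

/-- The tightest algorithm-dependent uniform convergence bound `ε_unif-alg(m,δ)`
w.r.t. `L^{(γ)}`. -/
def unifAlg (K D m : ℕ) (u : Fin K → ℝ) (γ δ : ℝ) : ℝ :=
  sInf {ε : ℝ | 0 ≤ ε ∧
    ∃ 𝒮 : Set (Fin m → Ex K D), MeasurableSet 𝒮 ∧
      ENNReal.ofReal (1 - δ) ≤ μS K D m u 𝒮 ∧
      ∀ S ∈ 𝒮, ∀ S' ∈ 𝒮,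
        |testLoss K D u γ (alg K D m u S') - empLoss K D m γ (alg K D m u S') S| ≤ ε}

/-!
The ramp loss is nonnegative, so the generalization gap is at most the test loss of `h_S`.
On an example with label `y` the margin of `h_S` is `4 + y ⟪w₂, x₂⟫`, so it drops below
`γ ≤ 1` only if `-y ⟪w₂, x₂⟫ ≥ 3`; as `⟪w₂, x₂⟫` is centred Gaussian with variance
`32 ‖w₂‖² / D`, Chernoff's bound makes this happen with probability at most
`exp (-9 D / (64 ‖w₂‖²))`. It remains to see that `‖w₂‖² < 64 m` with probability `1 - δ`:
`w₂ = Σ yᵢ x₂⁽ⁱ⁾` is `N(0, (32 m / D) I)`, so `exp (D ‖w₂‖² / (128 m))` has mean `√2 ^ D`,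
and Markov's inequality bounds the failure probability by `(√2 / √e) ^ D`.
-/

open Real

theorem lintegral_pi_eq_prod_lintegral {ι : Type*} [Fintype ι] {E : ι → Type*}
    [∀ i, MeasurableSpace (E i)] {μ : ∀ i, Measure (E i)} [∀ i, IsProbabilityMeasure (μ i)]
    (f : ∀ i, E i → ℝ≥0∞) (hf : ∀ i, Measurable (f i)) :
    ∫⁻ x, ∏ i, f i (x i) ∂Measure.pi μ = ∏ i, ∫⁻ y, f i y ∂μ i := by
  rw [lintegral_prod_eq_prod_lintegral_of_indepFun _ _
    (iIndepFun_pi fun i => (hf i).aemeasurable) fun i => (hf i).comp (measurable_pi_apply i)]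
  exact Finset.prod_congr rfl fun i _ => (measurePreserving_eval μ i).lintegral_comp (hf i)

theorem lintegral_exp_mul_gaussianReal (v : ℝ≥0) (t : ℝ) :
    ∫⁻ x, ENNReal.ofReal (exp (t * x)) ∂gaussianReal 0 v =
      ENNReal.ofReal (exp (v * t ^ 2 / 2)) := by
  rw [← ofReal_integral_eq_lintegral_ofReal (integrable_exp_mul_gaussianReal t)
    (ae_of_all _ fun x => (exp_pos _).le)]
  congr 1
  simpa [mgf] using congrFun (mgf_id_gaussianReal (μ := 0) (v := v)) t

theorem lintegral_exp_mul_sq_gaussianReal {c : ℝ} (hc : c < 1 / 2) :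
    ∫⁻ x, ENNReal.ofReal (exp (c * x ^ 2)) ∂gaussianReal 0 1 =
      ENNReal.ofReal (√(1 - 2 * c))⁻¹ := by
  have hb : 0 < 1 / 2 - c := by linarith
  have hmeas : Measurable fun x : ℝ => ENNReal.ofReal (exp (c * x ^ 2)) := by fun_prop
  have hdens : ∀ x : ℝ, gaussianPDF 0 1 x * ENNReal.ofReal (exp (c * x ^ 2)) =
      ENNReal.ofReal ((√(2 * π))⁻¹ * exp (-(1 / 2 - c) * x ^ 2)) := by
    intro x
    rw [gaussianPDF_def, gaussianPDFReal_def, ← ENNReal.ofReal_mul (by positivity), mul_assoc,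
      ← exp_add]
    congr 3
    · simp
    · push_cast; ring
  rw [gaussianReal_of_var_ne_zero 0 one_ne_zero,
    lintegral_withDensity_eq_lintegral_mul _ (measurable_gaussianPDF 0 1) hmeas]
  simp only [Pi.mul_apply, hdens]
  rw [← ofReal_integral_eq_lintegral_ofReal ((integrable_exp_neg_mul_sq hb).const_mul _)
    (ae_of_all _ fun x => by positivity), integral_const_mul, integral_gaussian]
  congr 1
  rw [show π / (1 / 2 - c) = 2 * π / (1 - 2 * c) by field_simp,
    sqrt_div' _ (by linarith : (0 : ℝ) ≤ 1 - 2 * c)]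
  have : √(2 * π) ≠ 0 := by positivity
  field_simp

@[fun_prop]
theorem Measurable.dotp {α : Type*} [MeasurableSpace α] {n : ℕ} {f g : α → Fin n → ℝ}
    (hf : Measurable f) (hg : Measurable g) : Measurable fun x => dotp (f x) (g x) := by
  unfold LinearExample.dotp; fun_prop

theorem dotp_neg_left {n : ℕ} (v w : Fin n → ℝ) : dotp (-v) w = -dotp v w := by
  simp [dotp]

theorem dotp_comm {n : ℕ} (v w : Fin n → ℝ) : dotp v w = dotp w v := by
  simp only [dotp, mul_comm]

theorem dotp_self_eq_inv_of_sqrt {n : ℕ} {u : Fin n → ℝ} {a : ℝ} (ha : 0 ≤ a)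
    (hu : √(∑ i, u i ^ 2) = 1 / √a) : dotp u u = a⁻¹ := by
  have h := congrArg (· ^ 2) hu
  simp only [one_div, inv_pow, sq_sqrt (Finset.sum_nonneg fun i _ => sq_nonneg (u i)),
    sq_sqrt ha] at h
  simpa [dotp, sq] using h

theorem lintegral_exp_mul_dotp_pi_gaussianReal {n : ℕ} (v : ℝ≥0) (w : Fin n → ℝ) (t : ℝ) :
    ∫⁻ x, ENNReal.ofReal (exp (t * dotp w x)) ∂Measure.pi (fun _ => gaussianReal 0 v) =
      ENNReal.ofReal (exp (v * t ^ 2 * dotp w w / 2)) := by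
  have hprod : ∀ x : Fin n → ℝ, ENNReal.ofReal (exp (t * dotp w x)) =
      ∏ i, ENNReal.ofReal (exp ((t * w i) * x i)) := by
    intro x
    rw [← ENNReal.ofReal_prod_of_nonneg fun i _ => (exp_pos _).le, ← exp_sum, dotp,
      Finset.mul_sum]
    simp only [mul_assoc]
  simp only [hprod]
  rw [lintegral_pi_eq_prod_lintegral (fun i y => ENNReal.ofReal (exp ((t * w i) * y)))
    fun i => by fun_prop]
  simp only [lintegral_exp_mul_gaussianReal]
  rw [← ENNReal.ofReal_prod_of_nonneg fun i _ => (exp_pos _).le, ← exp_sum, dotp,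
    Finset.mul_sum, Finset.sum_div]
  congr 2
  exact Finset.sum_congr rfl fun i _ => by ring

theorem measure_le_le_exp_mul_lintegral {α : Type*} [MeasurableSpace α] (μ : Measure α)
    {X : α → ℝ} (hX : Measurable X) {t : ℝ} (ht : 0 ≤ t) (a : ℝ) :
    μ {x | a ≤ X x} ≤
      ENNReal.ofReal (exp (-(t * a))) * ∫⁻ x, ENNReal.ofReal (exp (t * X x)) ∂μ := by
  have hpos : ENNReal.ofReal (exp (t * a)) ≠ 0 := by simp [exp_pos]
  calc μ {x | a ≤ X x}
      ≤ μ {x | ENNReal.ofReal (exp (t * a)) ≤ ENNReal.ofReal (exp (t * X x))} :=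
        measure_mono fun x (hx : a ≤ X x) =>
          ENNReal.ofReal_le_ofReal (exp_le_exp.2 (mul_le_mul_of_nonneg_left hx ht))
    _ ≤ (∫⁻ x, ENNReal.ofReal (exp (t * X x)) ∂μ) / ENNReal.ofReal (exp (t * a)) :=
        meas_ge_le_lintegral_div (by fun_prop) hpos ENNReal.ofReal_ne_top
    _ = _ := by
        rw [ENNReal.div_eq_inv_mul, ← ENNReal.ofReal_inv_of_pos (exp_pos _), exp_neg]

theorem pi_gaussianReal_dotp_tail {n : ℕ} {v : ℝ≥0} (hv : 0 < v) {w : Fin n → ℝ} {R a : ℝ}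
    (hR : 0 < R) (ha : 0 ≤ a) (hw : dotp w w ≤ R) :
    Measure.pi (fun _ => gaussianReal 0 v) {x | a ≤ dotp w x} ≤
      ENNReal.ofReal (exp (-(a ^ 2 / (2 * v * R)))) := by
  have ht : 0 ≤ a / (v * R) := by positivity
  refine (measure_le_le_exp_mul_lintegral _ (by fun_prop) ht a).trans ?_
  rw [lintegral_exp_mul_dotp_pi_gaussianReal, ← ENNReal.ofReal_mul (exp_pos _).le, ← exp_add]
  refine ENNReal.ofReal_le_ofReal (exp_le_exp.2 ?_)
  have hv' : (0 : ℝ) < v := hv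
  calc -(a / (v * R) * a) + v * (a / (v * R)) ^ 2 * dotp w w / 2
      ≤ -(a / (v * R) * a) + v * (a / (v * R)) ^ 2 * R / 2 := by gcongr
    _ = -(a ^ 2 / (2 * v * R)) := by field_simp; ring

section

variable {K D m : ℕ} {u : Fin K → ℝ}

instance : IsProbabilityMeasure (noise D) := by
  unfold noise; infer_instance

theorem μD_apply {s : Set (Ex K D)} (hs : MeasurableSet s) :
    μD K D u s = 2⁻¹ * noise D {x | (((2 : ℝ) • u, x), (1 : ℝ)) ∈ s} +
      2⁻¹ * noise D {x | (((-2 : ℝ) • u, x), (-1 : ℝ)) ∈ s} := by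
  simp only [μD, Measure.add_apply, Measure.smul_apply, one_div, smul_eq_mul]
  rw [Measure.map_apply (by fun_prop) hs, Measure.map_apply (by fun_prop) hs]
  rfl

instance : IsProbabilityMeasure (μD K D u) := by
  constructor
  rw [μD_apply MeasurableSet.univ]
  simp [ENNReal.inv_two_add_inv_two]

instance : IsProbabilityMeasure (μS K D m u) := by
  unfold μS; infer_instance

theorem lintegral_μD {g : Ex K D → ℝ≥0∞} (hg : Measurable g) :
    ∫⁻ z, g z ∂μD K D u = 2⁻¹ * ∫⁻ x, g (((2 : ℝ) • u, x), 1) ∂noise D +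
      2⁻¹ * ∫⁻ x, g (((-2 : ℝ) • u, x), -1) ∂noise D := by
  simp only [μD, one_div]
  rw [lintegral_add_measure, lintegral_smul_measure, lintegral_smul_measure,
    lintegral_map hg (by fun_prop), lintegral_map hg (by fun_prop)]
  rfl

def w₂ (S : Fin m → Ex K D) : Fin D → ℝ := ∑ i, (S i).2 • (S i).1.2

@[fun_prop]
theorem measurable_w₂ : Measurable (w₂ : (Fin m → Ex K D) → Fin D → ℝ) := by
  unfold w₂; fun_prop

theorem dotp_w₂_left (S : Fin m → Ex K D) (x : Fin D → ℝ) :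
    dotp (w₂ S) x = ∑ i, (S i).2 * dotp (S i).1.2 x := by
  simp only [dotp, w₂, Finset.sum_apply, Pi.smul_apply, smul_eq_mul, Finset.sum_mul,
    Finset.mul_sum]
  rw [Finset.sum_comm]
  exact Finset.sum_congr rfl fun i _ => Finset.sum_congr rfl fun j _ => by ring

theorem lintegral_exp_mul_dotp_w₂ (G : Fin D → ℝ) (t : ℝ) :
    ∫⁻ S, ENNReal.ofReal (exp (t * dotp (w₂ S) G)) ∂μS K D m u =
      ENNReal.ofReal (exp (m * (32 / D) * t ^ 2 * dotp G G / 2)) := by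
  have hprod : ∀ S : Fin m → Ex K D, ENNReal.ofReal (exp (t * dotp (w₂ S) G)) =
      ∏ i, ENNReal.ofReal (exp (t * (S i).2 * dotp (S i).1.2 G)) := by
    intro S
    rw [← ENNReal.ofReal_prod_of_nonneg fun i _ => (exp_pos _).le, ← exp_sum, dotp_w₂_left,
      Finset.mul_sum]
    simp only [mul_assoc]
  simp only [hprod]
  rw [μS, lintegral_pi_eq_prod_lintegral
    (fun _ (z : Ex K D) => ENNReal.ofReal (exp (t * z.2 * dotp z.1.2 G)))
    fun _ => by fun_prop, Finset.prod_const, Finset.card_fin, lintegral_μD (by fun_prop)]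
  simp only [mul_one, mul_neg_one, dotp_comm _ G]
  rw [noise, lintegral_exp_mul_dotp_pi_gaussianReal, lintegral_exp_mul_dotp_pi_gaussianReal,
    neg_sq, ← add_mul, ENNReal.inv_two_add_inv_two, one_mul, ← ENNReal.ofReal_pow (exp_pos _).le,
    ← exp_nat_mul]
  push_cast
  ring_nf

theorem lintegral_exp_mul_sq_norm_w₂ {s : ℝ} (hs : 0 ≤ s) (hsD : 64 * m * s < D) :
    ∫⁻ S, ENNReal.ofReal (exp (s * dotp (w₂ S) (w₂ S))) ∂μS K D m u =
      ENNReal.ofReal (√(1 - 64 * m * s / D))⁻¹ ^ D := by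
  have hD : (0 : ℝ) < D := by nlinarith [(Nat.cast_nonneg m : (0 : ℝ) ≤ m)]
  set a := √(2 * s)
  have ha : a ^ 2 = 2 * s := sq_sqrt (by positivity)
  set Γ : Measure (Fin D → ℝ) := Measure.pi fun _ => gaussianReal 0 1
  -- `exp (s ‖c‖²)` is the average of `exp ⟪√(2s) c, G⟫` over a standard Gaussian vector `G`.
  have hlin : ∀ c : Fin D → ℝ, ENNReal.ofReal (exp (s * dotp c c)) =
      ∫⁻ G, ENNReal.ofReal (exp (a * dotp c G)) ∂Γ := by
    intro c
    rw [lintegral_exp_mul_dotp_pi_gaussianReal, ha]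
    congr 2
    push_cast
    ring
  have hcoord : ∀ G : Fin D → ℝ, ENNReal.ofReal (exp (m * (32 / D) * a ^ 2 * dotp G G / 2)) =
      ∏ j, ENNReal.ofReal (exp (32 * m * s / D * G j ^ 2)) := by
    intro G
    rw [← ENNReal.ofReal_prod_of_nonneg fun i _ => (exp_pos _).le, ← exp_sum, dotp, ha,
      Finset.mul_sum, Finset.sum_div]
    congr 2
    exact Finset.sum_congr rfl fun j _ => by ring
  simp only [hlin]
  rw [lintegral_lintegral_swap (by fun_prop)]
  simp only [lintegral_exp_mul_dotp_w₂, hcoord]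
  rw [lintegral_pi_eq_prod_lintegral
    (fun _ y => ENNReal.ofReal (exp (32 * m * s / D * y ^ 2))) fun _ => by fun_prop,
    lintegral_exp_mul_sq_gaussianReal, Finset.prod_const, Finset.card_fin]
  · congr 4
    ring
  · rw [div_lt_iff₀ hD]
    linarith

theorem μS_sq_norm_w₂_ge_le (hm : m ≠ 0) (hD : D ≠ 0) :
    μS K D m u {S | 64 * m ≤ dotp (w₂ S) (w₂ S)} ≤
      ENNReal.ofReal (exp (-(D / 2)) * √2 ^ D) := by
  have hm' : (0 : ℝ) < m := by positivity
  have hD' : (0 : ℝ) < D := by positivity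
  have hs : 64 * m * (D / (128 * m)) = (D / 2 : ℝ) := by field_simp; ring
  refine (measure_le_le_exp_mul_lintegral _ (by fun_prop)
    (by positivity : (0 : ℝ) ≤ D / (128 * m)) _).trans_eq ?_
  rw [lintegral_exp_mul_sq_norm_w₂ (by positivity) (by rw [hs]; linarith), mul_comm _ (64 * _),
    hs, ENNReal.ofReal_mul (exp_pos _).le, ← ENNReal.ofReal_pow (by positivity)]
  congr 3
  rw [← sqrt_inv]
  congr 1
  field_simp
  norm_num

theorem exp_neg_half_mul_sqrt_two_pow_le {D : ℕ} {δ : ℝ} (hδ0 : 0 < δ) (hδ1 : δ ≤ 1)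
    (hD : 32 * log δ⁻¹ ≤ D) : exp (-(D / 2)) * √2 ^ D ≤ δ := by
  have hsqrt : √2 ^ D = exp (D * (log 2 / 2)) := by
    rw [← log_sqrt zero_le_two, exp_nat_mul, exp_log (by positivity)]
  have hlog : 0 ≤ log δ⁻¹ := log_nonneg (one_le_inv_iff₀.2 ⟨hδ0, hδ1⟩)
  rw [hsqrt, ← exp_add, ← exp_log hδ0, ← neg_neg (log δ), ← log_inv]
  refine exp_le_exp.2 ?_
  nlinarith [log_two_lt_d9]

theorem ramp_nonneg (γ y' y : ℝ) : 0 ≤ ramp γ y' y := by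
  unfold ramp
  split_ifs with h₁ h₂
  · exact zero_le_one
  · exact le_rfl
  · rw [sub_nonneg, div_le_one (by linarith)]
    linarith

theorem ramp_le_one (γ y' y : ℝ) : ramp γ y' y ≤ 1 := by
  unfold ramp
  split_ifs with h₁ h₂
  · exact le_rfl
  · exact zero_le_one
  · have : 0 ≤ y * y' / γ := div_nonneg (by linarith) (by linarith)
    linarith

theorem ramp_eq_zero_of_lt {γ y' y : ℝ} (hγ : 0 ≤ γ) (h : γ < y * y') : ramp γ y' y = 0 := by
  rw [ramp, if_neg (by linarith), if_pos h.le]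

theorem ramp_le_indicator {γ : ℝ} (hγ : 0 ≤ γ) (y' y : ℝ) :
    ramp γ y' y ≤ {z : ℝ | z ≤ γ}.indicator 1 (y * y') := by
  by_cases h : y * y' ≤ γ
  · simpa [h] using ramp_le_one γ y' y
  · simp [h, ramp_eq_zero_of_lt hγ (not_le.1 h)]

theorem empLoss_nonneg (γ : ℝ) (h : (Fin K → ℝ) × (Fin D → ℝ) → ℝ)
    (S : Fin m → Ex K D) : 0 ≤ empLoss K D m γ h S :=
  mul_nonneg (by positivity) (Finset.sum_nonneg fun i _ => ramp_nonneg _ _ _)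

theorem testLoss_le_measureReal {γ : ℝ} (hγ : 0 ≤ γ) {h : (Fin K → ℝ) × (Fin D → ℝ) → ℝ}
    (hh : Measurable h) :
    testLoss K D u γ h ≤ (μD K D u).real {z | z.2 * h z.1 ≤ γ} := by
  have hs : MeasurableSet {z : Ex K D | z.2 * h z.1 ≤ γ} :=
    measurableSet_le (by fun_prop) measurable_const
  rw [← integral_indicator_one hs]
  exact integral_mono_of_nonneg (ae_of_all _ fun z => ramp_nonneg _ _ _)
    ((integrable_const 1).indicator hs) (ae_of_all _ fun z => ramp_le_indicator hγ _ _)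

theorem alg_apply_smul (hu : dotp u u = (m : ℝ)⁻¹) (hm : m ≠ 0) (S : Fin m → Ex K D) (c : ℝ)
    (x : Fin D → ℝ) : alg K D m u S (c • u, x) = 2 * c + dotp (w₂ S) x := by
  have : dotp ((2 * (m : ℝ)) • u) (c • u) = 2 * c := by
    simp only [dotp, Pi.smul_apply, smul_eq_mul] at hu ⊢
    calc ∑ i, 2 * m * u i * (c * u i) = 2 * m * c * ∑ i, u i * u i := by
          rw [Finset.mul_sum]; exact Finset.sum_congr rfl fun i _ => by ring
      _ = 2 * c := by rw [hu]; field_simp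
  rw [alg, this]
  rfl

theorem testLoss_alg_le (hu : dotp u u = (m : ℝ)⁻¹) (hm : m ≠ 0) (hD : D ≠ 0) {γ : ℝ}
    (hγ0 : 0 ≤ γ) (hγ1 : γ ≤ 1) {S : Fin m → Ex K D} (hS : dotp (w₂ S) (w₂ S) ≤ 64 * m) :
    testLoss K D u γ (alg K D m u S) ≤ exp (-(9 * D / (4096 * m))) := by
  set B := {z : Ex K D | z.2 * alg K D m u S z.1 ≤ γ}
  set p := ENNReal.ofReal (exp (-(9 * D / (4096 * m))))
  have hB : MeasurableSet B := measurableSet_le (by unfold alg; fun_prop) measurable_const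
  have htail : ∀ w : Fin D → ℝ, dotp w w ≤ 64 * m → noise D {x | 3 ≤ dotp w x} ≤ p := by
    intro w hw
    refine (pi_gaussianReal_dotp_tail (v := 32 / D) (by positivity) (by positivity) (by norm_num)
      hw).trans_eq ?_
    congr 3
    push_cast
    field_simp
    ring
  have hplus : noise D {x | (((2 : ℝ) • u, x), (1 : ℝ)) ∈ B} ≤ p := by
    refine (measure_mono fun x (hx : 1 * alg K D m u S _ ≤ γ) => ?_).trans
      (htail (-w₂ S) (by simpa [dotp_neg_left, dotp_comm (w₂ S)] using hS))
    rw [alg_apply_smul hu hm] at hx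
    show 3 ≤ dotp (-w₂ S) x
    rw [dotp_neg_left]
    linarith
  have hminus : noise D {x | (((-2 : ℝ) • u, x), (-1 : ℝ)) ∈ B} ≤ p := by
    refine (measure_mono fun x (hx : -1 * alg K D m u S _ ≤ γ) => ?_).trans (htail (w₂ S) hS)
    rw [alg_apply_smul hu hm] at hx
    show 3 ≤ dotp (w₂ S) x
    linarith
  refine (testLoss_le_measureReal hγ0 (by unfold alg; fun_prop)).trans
    (ENNReal.toReal_le_of_le_ofReal (exp_pos _).le ?_)
  calc μD K D u B ≤ 2⁻¹ * p + 2⁻¹ * p := by rw [μD_apply hB]; gcongr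
    _ = p := by rw [← add_mul, ENNReal.inv_two_add_inv_two, one_mul]

theorem exp_neg_nine_mul_div_le {ε : ℝ} (hm : m ≠ 0) (hε : 0 < ε)
    (hD : 2304 * m * log (2 / ε) ≤ D) : exp (-(9 * D / (4096 * m))) ≤ ε := by
  have hlog : log (2 / ε) ≤ 9 * D / (4096 * m) := by
    rw [le_div_iff₀ (by positivity)]
    rcases le_total 0 (log (2 / ε)) with h | h
    · nlinarith
    · nlinarith [(Nat.cast_nonneg D : (0 : ℝ) ≤ D)]
  calc exp (-(9 * D / (4096 * m))) ≤ exp (-log (2 / ε)) := exp_le_exp.2 (neg_le_neg hlog)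
    _ = ε / 2 := by rw [exp_neg, exp_log (by positivity), inv_div]
    _ ≤ ε := by linarith

end

theorem generalization_error_small_general
    (K D m : ℕ) (hm : 1 ≤ m) (u : Fin K → ℝ)
    (hu : Real.sqrt (∑ i, u i ^ 2) = 1 / Real.sqrt m)
    (ε δ : ℝ) (hε : 0 < ε) (hδ0 : 0 < δ) (hδ1 : δ ≤ 1 / 4)
    (hD1 : 32 * Real.log (6 * m / δ) ≤ (D : ℝ))
    (hD3 : 2304 * m * Real.log (2 / ε) ≤ (D : ℝ)) :
    ∀ γ ∈ Set.Icc (0 : ℝ) 1, genErr K D m u γ δ ≤ ε := by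
  rintro γ ⟨hγ0, hγ1⟩
  have hm0 : m ≠ 0 := by omega
  have hm1 : (1 : ℝ) ≤ m := by exact_mod_cast hm
  have hlog : log δ⁻¹ ≤ log (6 * m / δ) :=
    log_le_log (by positivity) (by rw [inv_eq_one_div]; gcongr; linarith)
  have hD0 : D ≠ 0 := by
    have : 0 < log δ⁻¹ := log_pos (one_lt_inv_iff₀.2 ⟨hδ0, by linarith⟩)
    exact_mod_cast (by linarith : (0 : ℝ) < D).ne'
  have hu' := dotp_self_eq_inv_of_sqrt (Nat.cast_nonneg m) hu
  have hbad : μS K D m u {S | 64 * m ≤ dotp (w₂ S) (w₂ S)} ≤ ENNReal.ofReal δ :=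
    (μS_sq_norm_w₂_ge_le hm0 hD0).trans (ENNReal.ofReal_le_ofReal
      (exp_neg_half_mul_sqrt_two_pow_le hδ0 (by linarith) (by linarith)))
  refine csInf_le ⟨0, fun _ h => h.1⟩ ⟨hε.le, ?_⟩
  calc ENNReal.ofReal (1 - δ) ≤ μS K D m u {S | 64 * m ≤ dotp (w₂ S) (w₂ S)}ᶜ := by
        rw [prob_compl_eq_one_sub (measurableSet_le (by fun_prop) (by fun_prop)),
          ENNReal.ofReal_sub _ hδ0.le, ENNReal.ofReal_one]
        exact tsub_le_tsub_left hbad 1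
    _ ≤ _ := measure_mono fun S hS => by
        have := testLoss_alg_le hu' hm0 hD0 hγ0 hγ1 (not_le.1 (Set.notMem_ofPred_iff.1 hS)).le
        show _ ≤ ε
        linarith [empLoss_nonneg γ (alg K D m u S) S, exp_neg_nine_mul_div_le hm0 hε hD3]

/-- in the linear setup, for suitable `D`, for every `γ ∈ [0,1]`
the generalization error w.r.t. the ramp loss `L^{(γ)}` satisfies `ε_gen(m,δ) ≤ ε`. -/
theorem generalization_error_small
    (K D m : ℕ) (hm : 1 ≤ m) (u : Fin K → ℝ)
    (hu : Real.sqrt (∑ i, u i ^ 2) = 1 / Real.sqrt m)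
    (ε δ : ℝ) (hε : 0 < ε) (hδ0 : 0 < δ) (hδ1 : δ ≤ 1 / 4)
    (hD1 : 32 * Real.log (6 * m / δ) ≤ (D : ℝ))
    (hD2 : 1152 * m * Real.log (6 * m / δ) ≤ (D : ℝ))
    (hD3 : 2304 * m * Real.log (2 / ε) ≤ (D : ℝ)) :
    ∀ γ ∈ Set.Icc (0 : ℝ) 1, genErr K D m u γ δ ≤ ε :=
  generalization_error_small_general K D m hm u hu ε δ hε hδ0 hδ1 hD1 hD3

end LinearExample
end
end

section
/- For all real numbers a, b with 0 < b < a < 1 and a ≥ e^{3/2}·b, the binary KL divergence satisfies KL(a‖b) = a·ln(a/b) + (1−a)·ln((1−a)/(1−b)) ≥ a/2; in particular KL(a‖b) ≥ (a−b)/2. -/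
/-!
Since `a / b ≥ e^{3/2}`, the first term of `KL(a‖b)` is at least `3a/2`; by `log t ≥ 1 - 1/t`,
the second is at least `(1 - a) - (1 - b) = b - a`. The sum is therefore at least `a/2 + b`.
-/

open Real

lemma sub_le_mul_log_div {x y : ℝ} (hx : 0 < x) (hy : 0 < y) : x - y ≤ x * log (x / y) := by
  have hlog : 1 - y / x ≤ log (x / y) := by
    simpa only [inv_div] using one_sub_inv_le_log_of_pos (div_pos hx hy)
  calc x - y = x * (1 - y / x) := by field_simp
    _ ≤ x * log (x / y) := mul_le_mul_of_nonneg_left hlog hx.le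

lemma mul_le_mul_log_div_of_exp_mul_le {c x y : ℝ} (hy : 0 < y) (h : exp c * y ≤ x) :
    c * x ≤ x * log (x / y) := by
  have hx : 0 < x := (mul_pos (exp_pos c) hy).trans_le h
  have hlog : c ≤ log (x / y) := by
    rwa [le_log_iff_exp_le (div_pos hx hy), le_div_iff₀ hy]
  simpa only [mul_comm c x] using mul_le_mul_of_nonneg_left hlog hx.le

/-- for all reals `0 < b < a < 1` with `a ≥ e^{3/2}·b`, the
binary KL divergence `KL(a‖b) = a·ln(a/b) + (1-a)·ln((1-a)/(1-b))` satisfies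
`KL(a‖b) ≥ a/2`; in particular `KL(a‖b) ≥ (a-b)/2`. -/
theorem binary_kl_lower_bound (a b : ℝ) (hb : 0 < b) (hba : b < a) (ha : a < 1)
    (hab : Real.exp (3 / 2) * b ≤ a) :
    a / 2 ≤ a * Real.log (a / b) + (1 - a) * Real.log ((1 - a) / (1 - b)) ∧
    (a - b) / 2 ≤ a * Real.log (a / b) + (1 - a) * Real.log ((1 - a) / (1 - b)) := by
  have hfirst := mul_le_mul_log_div_of_exp_mul_le hb hab
  have hsecond := sub_le_mul_log_div (x := 1 - a) (y := 1 - b) (by linarith) (by linarith)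
  constructor <;> linarith
end

section
/- Let 𝒟 be any probability distribution over X × {−1,+1}, S ↦ h_S any algorithm mapping m-samples to real-valued hypotheses, and δ ∈ (0,1). Suppose that for every γ ≥ 0 the tightest algorithm-dependent uniform convergence bound and the generalization error with respect to the ramp loss L^(γ) satisfy ε_unif-alg^(γ)(m,δ) ≥ 1 − ε_gen^(γ)(m,δ). Then for every γ ≥ 0, Pr_{S~𝒟^m}[L̂^(γ)_S(h_S) + ε_unif-alg^(γ)(m,δ) ≥ 1/2] > δ; that is, the uniform-convergence-based upper bound on the 0-1 test error, L̂^(γ)_S(h_S) + ε_unif-alg^(γ)(m,δ), fails to be below 1/2 with probability more than δ, for every choice of γ. -/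
open MeasureTheory ProbabilityTheory
open scoped ENNReal NNReal

noncomputable section

namespace AnyGamma

variable {X : Type*} [MeasurableSpace X]

/-- The ramp loss `L^{(γ)}`. -/
def ramp (γ y' y : ℝ) : ℝ :=
  if y * y' ≤ 0 then 1 else if γ ≤ y * y' then 0 else 1 - y * y' / γ

/-- Distribution of an i.i.d. `m`-sample from `𝒟`. -/
def μS (𝒟 : Measure (X × ℝ)) (m : ℕ) : Measure (Fin m → X × ℝ) :=
  Measure.pi fun _ => 𝒟

/-- Expected ramp loss `L^{(γ)}_𝒟(h)`. -/
def Ld (𝒟 : Measure (X × ℝ)) (γ : ℝ) (h : X → ℝ) : ℝ :=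
  ∫ z, ramp γ (h z.1) z.2 ∂𝒟

/-- Empirical ramp loss `L̂^{(γ)}_S(h)`. -/
def Le (m : ℕ) (γ : ℝ) (S : Fin m → X × ℝ) (h : X → ℝ) : ℝ :=
  (1 / (m : ℝ)) * ∑ i, ramp γ (h (S i).1) (S i).2

/-- The generalization error `ε_gen^{(γ)}(m,δ)` of the algorithm. -/
def genErr (𝒟 : Measure (X × ℝ)) (m : ℕ) (alg : (Fin m → X × ℝ) → X → ℝ)
    (γ δ : ℝ) : ℝ :=
  sInf {ε : ℝ | 0 ≤ ε ∧
    ENNReal.ofReal (1 - δ) ≤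
      μS 𝒟 m {S | Ld 𝒟 γ (alg S) - Le m γ S (alg S) ≤ ε}}

/-- The tightest algorithm-dependent uniform convergence bound
`ε_unif-alg^{(γ)}(m,δ)`. -/
def unifAlg (𝒟 : Measure (X × ℝ)) (m : ℕ) (alg : (Fin m → X × ℝ) → X → ℝ)
    (γ δ : ℝ) : ℝ :=
  sInf {ε : ℝ | 0 ≤ ε ∧
    ∃ 𝒮 : Set (Fin m → X × ℝ), MeasurableSet 𝒮 ∧
      ENNReal.ofReal (1 - δ) ≤ μS 𝒟 m 𝒮 ∧
      ∀ S ∈ 𝒮, ∀ S' ∈ 𝒮, |Ld 𝒟 γ (alg S') - Le m γ S (alg S')| ≤ ε}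

lemma ramp_nonneg (γ y' y : ℝ) : 0 ≤ ramp γ y' y := by
  unfold ramp
  split_ifs with h1 h2
  · norm_num
  · norm_num
  · push_neg at h1 h2
    have hγ : 0 < γ := lt_trans h1 h2
    have : y * y' / γ < 1 := (div_lt_one hγ).mpr h2
    linarith

lemma ramp_le_one (γ y' y : ℝ) : ramp γ y' y ≤ 1 := by
  unfold ramp
  split_ifs with h1 h2
  · norm_num
  · norm_num
  · push_neg at h1 h2
    have hγ : 0 < γ := lt_trans h1 h2
    have : 0 ≤ y * y' / γ := div_nonneg h1.le hγ.le
    linarith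

lemma Ld_nonneg (𝒟 : Measure (X × ℝ)) (γ : ℝ) (h : X → ℝ) : 0 ≤ Ld 𝒟 γ h :=
  integral_nonneg fun z => ramp_nonneg γ (h z.1) z.2

lemma Ld_le_one (𝒟 : Measure (X × ℝ)) [IsProbabilityMeasure 𝒟] (γ : ℝ)
    (h : X → ℝ) : Ld 𝒟 γ h ≤ 1 := by
  unfold Ld
  by_cases hint : Integrable (fun z : X × ℝ => ramp γ (h z.1) z.2) 𝒟
  · calc ∫ z, ramp γ (h z.1) z.2 ∂𝒟 ≤ ∫ _, (1 : ℝ) ∂𝒟 :=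
        integral_mono hint (integrable_const 1) fun z => ramp_le_one γ (h z.1) z.2
      _ = 1 := by simp
  · rw [integral_undef hint]; norm_num

lemma Le_nonneg (m : ℕ) (γ : ℝ) (S : Fin m → X × ℝ) (h : X → ℝ) :
    0 ≤ Le m γ S h := by
  unfold Le
  apply mul_nonneg (by positivity)
  exact Finset.sum_nonneg fun i _ => ramp_nonneg γ (h (S i).1) (S i).2

lemma Le_le_one (m : ℕ) (hm : 1 ≤ m) (γ : ℝ) (S : Fin m → X × ℝ) (h : X → ℝ) :
    Le m γ S h ≤ 1 := by
  unfold Le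
  have hm0 : (0 : ℝ) < (m : ℝ) := by exact_mod_cast hm
  have hsum : (∑ i, ramp γ (h (S i).1) (S i).2) ≤ (m : ℝ) := by
    calc (∑ i : Fin m, ramp γ (h (S i).1) (S i).2) ≤ ∑ _i : Fin m, (1 : ℝ) :=
        Finset.sum_le_sum fun i _ => ramp_le_one γ (h (S i).1) (S i).2
      _ = (m : ℝ) := by simp
  rw [one_div, inv_mul_le_iff₀ hm0, mul_one]
  exact hsum

/-- if for every `γ ≥ 0` the tightest algorithm-dependent
uniform convergence bound satisfies `ε_unif-alg^{(γ)} ≥ 1 - ε_gen^{(γ)}`, then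
for every `γ ≥ 0` the uniform-convergence-based upper bound on the 0-1 test
error, `L̂^{(γ)}_S(h_S) + ε_unif-alg^{(γ)}(m,δ)`, is at least `1/2` with
probability more than `δ` over the training sample. -/
theorem margin_bound_vacuous_for_all_gamma
    (𝒟 : Measure (X × ℝ)) [IsProbabilityMeasure 𝒟]
    (hsupp : 𝒟 {z | z.2 = 1 ∨ z.2 = -1} = 1)
    (m : ℕ) (hm : 1 ≤ m)
    (alg : (Fin m → X × ℝ) → X → ℝ)
    (δ : ℝ) (hδ0 : 0 < δ) (hδ1 : δ < 1)
    (hyp : ∀ γ : ℝ, 0 ≤ γ →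
      1 - genErr 𝒟 m alg γ δ ≤ unifAlg 𝒟 m alg γ δ) :
    ∀ γ : ℝ, 0 ≤ γ →
      ENNReal.ofReal δ <
        μS 𝒟 m {S | 1/2 ≤ Le m γ S (alg S) + unifAlg 𝒟 m alg γ δ} := by
  intro γ hγ
  haveI : IsProbabilityMeasure (μS 𝒟 m) := by
    unfold μS; infer_instance
  -- abbreviations for the two defining sets
  set G := {ε : ℝ | 0 ≤ ε ∧
    ENNReal.ofReal (1 - δ) ≤
      μS 𝒟 m {S | Ld 𝒟 γ (alg S) - Le m γ S (alg S) ≤ ε}} with hG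
  set U := {ε : ℝ | 0 ≤ ε ∧
    ∃ 𝒮 : Set (Fin m → X × ℝ), MeasurableSet 𝒮 ∧
      ENNReal.ofReal (1 - δ) ≤ μS 𝒟 m 𝒮 ∧
      ∀ S ∈ 𝒮, ∀ S' ∈ 𝒮, |Ld 𝒟 γ (alg S') - Le m γ S (alg S')| ≤ ε} with hU
  -- U is nonempty : 1 ∈ U with 𝒮 = univ
  have hUne : U.Nonempty := by
    refine ⟨1, by norm_num, Set.univ, MeasurableSet.univ, ?_, ?_⟩
    · rw [measure_univ]
      exact ENNReal.ofReal_le_one.mpr (by linarith)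
    · intro S _ S' _
      rw [abs_le]
      constructor
      · have := Ld_nonneg 𝒟 γ (alg S')
        have := Le_le_one m hm γ S (alg S')
        linarith
      · have := Ld_le_one 𝒟 γ (alg S')
        have := Le_nonneg m γ S (alg S')
        linarith
  -- U ⊆ G (take S' = S)
  have hUG : U ⊆ G := by
    rintro ε ⟨hε0, 𝒮, h𝒮meas, h𝒮μ, h𝒮⟩
    refine ⟨hε0, le_trans h𝒮μ (measure_mono ?_)⟩
    intro S hS
    have := h𝒮 S hS S hS
    rw [abs_le] at this
    exact this.2
  -- hence genErr ≤ unifAlg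
  have hGbdd : BddBelow G := ⟨0, fun ε hε => hε.1⟩
  have hgu : genErr 𝒟 m alg γ δ ≤ unifAlg 𝒟 m alg γ δ := by
    unfold genErr unifAlg
    exact csInf_le_csInf hGbdd hUne hUG
  -- hence unifAlg ≥ 1/2
  have hu : (1:ℝ)/2 ≤ unifAlg 𝒟 m alg γ δ := by
    have := hyp γ hγ
    linarith
  -- the event is everything
  have hset : {S | 1/2 ≤ Le m γ S (alg S) + unifAlg 𝒟 m alg γ δ} =
      (Set.univ : Set (Fin m → X × ℝ)) := by
    apply Set.eq_univ_iff_forall.mpr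
    intro S
    have := Le_nonneg m γ S (alg S)
    show (1:ℝ)/2 ≤ _
    linarith
  rw [hset, measure_univ]
  exact ENNReal.ofReal_lt_one.mpr hδ1

end AnyGamma
end
end

section
/- Let D, m ≥ 1, let h* : ℝ^D → {−1,+1} be measurable, and let 𝒟 be the distribution of (x, h*(x)) where x is a standard Gaussian N(0, I_D) on ℝ^D. Consider the algorithm that, on a training set S with input points x^(1),…,x^(m), outputs the classifier h_S defined by h_S(x) = −h*(x) if x ∈ {−x^(1),…,−x^(m)} and h_S(x) = h*(x) otherwise. Then with respect to the 0-1 loss: (i) with probability 1 over S ~ 𝒟^m, L̂_S(h_S) = 0 and L_𝒟(h_S) = 0, so the generalization error satisfies ε_gen(m,δ) = 0 for every δ ∈ (0,1); and (ii) for every δ ∈ (0, 1/2), the tightest algorithm-dependent uniform convergence bound satisfies ε_unif-alg(m,δ) = 1. -/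
open MeasureTheory ProbabilityTheory
open scoped ENNReal NNReal

noncomputable section

namespace AbstractSetup

attribute [local instance] Classical.propDecidable

/-- The 0-1 loss `1[h(x) ≠ y]` for classifiers with values in `{-1,+1} ⊆ ℝ`. -/
def loss01 (a y : ℝ) : ℝ := if a = y then 0 else 1

/-- The data distribution: `(x, h*(x))` with `x` standard Gaussian on `ℝ^D`. -/
def μD (D : ℕ) (hstar : (Fin D → ℝ) → ℝ) : Measure ((Fin D → ℝ) × ℝ) :=
  (Measure.pi fun _ : Fin D => gaussianReal 0 1).map (fun x => (x, hstar x))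

/-- Distribution of an i.i.d. `m`-sample. -/
def μS (D m : ℕ) (hstar : (Fin D → ℝ) → ℝ) : Measure (Fin m → (Fin D → ℝ) × ℝ) :=
  Measure.pi fun _ => μD D hstar

/-- The learner: it agrees with `h*` everywhere except on the negations
`{-x⁽¹⁾, …, -x⁽ᵐ⁾}` of the training inputs, where it flips the sign of `h*`. -/
def alg (D m : ℕ) (hstar : (Fin D → ℝ) → ℝ)
    (S : Fin m → (Fin D → ℝ) × ℝ) : (Fin D → ℝ) → ℝ :=
  fun x => if ∃ i : Fin m, x = -(S i).1 then -hstar x else hstar x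

/-- Expected 0-1 loss `L_𝒟(h)`. -/
def Ld (D : ℕ) (hstar : (Fin D → ℝ) → ℝ) (h : (Fin D → ℝ) → ℝ) : ℝ :=
  ∫ z, loss01 (h z.1) z.2 ∂(μD D hstar)

/-- Empirical 0-1 loss `L̂_S(h)`. -/
def Le (D m : ℕ) (S : Fin m → (Fin D → ℝ) × ℝ) (h : (Fin D → ℝ) → ℝ) : ℝ :=
  (1 / (m : ℝ)) * ∑ i, loss01 (h (S i).1) (S i).2

/-- The generalization error `ε_gen(m,δ)` of the algorithm. -/
def genErr (D m : ℕ) (hstar : (Fin D → ℝ) → ℝ) (δ : ℝ) : ℝ :=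
  sInf {ε : ℝ | 0 ≤ ε ∧
    ENNReal.ofReal (1 - δ) ≤
      μS D m hstar
        {S | Ld D hstar (alg D m hstar S) - Le D m S (alg D m hstar S) ≤ ε}}

/-- The tightest algorithm-dependent uniform convergence bound `ε_unif-alg(m,δ)`. -/
def unifAlg (D m : ℕ) (hstar : (Fin D → ℝ) → ℝ) (δ : ℝ) : ℝ :=
  sInf {ε : ℝ | 0 ≤ ε ∧
    ∃ 𝒮 : Set (Fin m → (Fin D → ℝ) × ℝ), MeasurableSet 𝒮 ∧
      ENNReal.ofReal (1 - δ) ≤ μS D m hstar 𝒮 ∧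
      ∀ S ∈ 𝒮, ∀ S' ∈ 𝒮,
        |Ld D hstar (alg D m hstar S') - Le D m S (alg D m hstar S')| ≤ ε}

/-!
The learner `alg` changes `h*` only on a finite set, which is Gaussian-null, so its test error
is always `0`; and almost surely no training input is the negative of another (or zero), so it
fits the sample perfectly. But the Gaussian is symmetric, so any event of probability `> 1/2`
contains a sample `S` together with its reflection `S'`, whose inputs are the negatives of
those of `S`: the classifier learned from `S'` misclassifies every point of `S`, giving a gap of
`1` in the uniform-convergence bound.
-/

lemma measure_setOf_eq_one_of_ae {α : Type*} [MeasurableSpace α] {μ : Measure α}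
    [IsProbabilityMeasure μ] {p : α → Prop} (h : ∀ᵐ a ∂μ, p a) : μ {a | p a} = 1 := by
  rw [measure_congr ((ae_eq_univ (s := {a | p a})).2 (ae_iff.1 h)), measure_univ]

lemma Measure.pi_setOf_eval_eq_comp_eval_null {ι α : Type*} [Fintype ι] [MeasurableSpace α]
    [MeasurableEq α] (μ : Measure α) [IsProbabilityMeasure μ] [NullSingletonClass μ]
    {f : α → α} (hf : Measurable f) {i j : ι} (hij : i ≠ j) :
    Measure.pi (fun _ => μ) {X | X i = f (X j)} = 0 := by
  have hgraph : MeasurableSet {p : α × α | p.1 = f p.2} :=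
    measurableSet_eq_fun measurable_fst (hf.comp measurable_snd)
  have hpair : Measurable fun X : ι → α => (X i, X j) := by fun_prop
  calc Measure.pi (fun _ => μ) {X | X i = f (X j)}
      = ((Measure.pi fun _ => μ).map fun X => (X i, X j)) {p | p.1 = f p.2} :=
        (Measure.map_apply hpair hgraph).symm
    _ = μ.prod μ {p | p.1 = f p.2} := by
        rw [← Measure.infinitePi_eq_pi, Measure.infinitePi_map_eval_prod hij]
    _ = ∫⁻ y, μ {f y} ∂μ := Measure.prod_apply_symm hgraph
    _ = 0 := by simp

instance (v : ℝ≥0) : (gaussianReal 0 v).IsNegInvariant :=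
  ⟨by show Measure.map _ _ = _; simpa using gaussianReal_map_neg (μ := 0) (v := v)⟩

def stdGaussian (D : ℕ) : Measure (Fin D → ℝ) := Measure.pi fun _ : Fin D => gaussianReal 0 1

instance (D : ℕ) : IsProbabilityMeasure (stdGaussian D) := by
  unfold stdGaussian; infer_instance

instance (D : ℕ) : (stdGaussian D).IsNegInvariant := by
  unfold stdGaussian; infer_instance

instance (D : ℕ) [NeZero D] : NullSingletonClass (stdGaussian D) := by
  have : NullSingletonClass (gaussianReal 0 1) := nullSingletonClass_gaussianReal one_ne_zero
  unfold stdGaussian; infer_instance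

lemma measurePreserving_neg_stdGaussian_pi (D m : ℕ) :
    MeasurePreserving (Neg.neg : (Fin m → Fin D → ℝ) → _)
      (Measure.pi fun _ => stdGaussian D) (Measure.pi fun _ => stdGaussian D) :=
  measurePreserving_pi _ _ fun _ => Measure.measurePreserving_neg _

lemma ae_forall_ne_neg_stdGaussian_pi {D : ℕ} [NeZero D] (m : ℕ) :
    ∀ᵐ X ∂(Measure.pi fun _ : Fin m => stdGaussian D), ∀ i j, X i ≠ -X j := by
  refine ae_all_iff.2 fun i => ae_all_iff.2 fun j => ?_
  rcases eq_or_ne i j with rfl | hij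
  · filter_upwards [(Measure.quasiMeasurePreserving_eval _ i).ae (Measure.ae_ne _ 0)] with X hX
    rwa [Ne, self_eq_neg]
  · exact ae_iff.2 <| by
      simpa using Measure.pi_setOf_eval_eq_comp_eval_null (stdGaussian D) measurable_neg hij

lemma isProbabilityMeasure_μD {D : ℕ} {hstar : (Fin D → ℝ) → ℝ} (hmeas : Measurable hstar) :
    IsProbabilityMeasure (μD D hstar) :=
  Measure.isProbabilityMeasure_map (measurable_id.prodMk hmeas).aemeasurable

lemma isProbabilityMeasure_μS {D m : ℕ} {hstar : (Fin D → ℝ) → ℝ} (hmeas : Measurable hstar) :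
    IsProbabilityMeasure (μS D m hstar) :=
  have := isProbabilityMeasure_μD hmeas
  inferInstanceAs (IsProbabilityMeasure (Measure.pi _))

def labelSample {D m : ℕ} (hstar : (Fin D → ℝ) → ℝ) (X : Fin m → Fin D → ℝ) :
    Fin m → (Fin D → ℝ) × ℝ :=
  fun i => (X i, hstar (X i))

lemma measurable_labelSample {D m : ℕ} {hstar : (Fin D → ℝ) → ℝ} (hmeas : Measurable hstar) :
    Measurable (labelSample (m := m) hstar) := by
  unfold labelSample; fun_prop

lemma measurePreserving_labelSample {D m : ℕ} {hstar : (Fin D → ℝ) → ℝ}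
    (hmeas : Measurable hstar) :
    MeasurePreserving (labelSample hstar) (Measure.pi fun _ : Fin m => stdGaussian D)
      (μS D m hstar) := by
  have := isProbabilityMeasure_μD hmeas
  exact measurePreserving_pi _ _ fun _ => ⟨measurable_id.prodMk hmeas, rfl⟩

lemma loss01_self (a : ℝ) : loss01 a a = 0 := if_pos rfl

lemma loss01_neg_self {a : ℝ} (ha : a ≠ 0) : loss01 (-a) a = 1 :=
  if_neg fun h => ha (by linarith)

lemma loss01_nonneg (a y : ℝ) : 0 ≤ loss01 a y := by
  unfold loss01; split_ifs <;> norm_num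

lemma loss01_le_one (a y : ℝ) : loss01 a y ≤ 1 := by
  unfold loss01; split_ifs <;> norm_num

lemma Le_nonneg {D m : ℕ} (S : Fin m → (Fin D → ℝ) × ℝ) (h : (Fin D → ℝ) → ℝ) :
    0 ≤ Le D m S h :=
  mul_nonneg (by positivity) (Finset.sum_nonneg fun i _ => loss01_nonneg _ _)

lemma Le_le_one {D m : ℕ} (S : Fin m → (Fin D → ℝ) × ℝ) (h : (Fin D → ℝ) → ℝ) :
    Le D m S h ≤ 1 := by
  rcases Nat.eq_zero_or_pos m with rfl | hm
  · simp [Le]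
  calc Le D m S h ≤ (1 / (m : ℝ)) * ∑ _i : Fin m, 1 := by
        unfold Le; gcongr with i; exact loss01_le_one _ _
    _ = 1 := by simp [hm.ne']

lemma Le_eq_zero_of_forall {D m : ℕ} {S : Fin m → (Fin D → ℝ) × ℝ} {h : (Fin D → ℝ) → ℝ}
    (hS : ∀ i, loss01 (h (S i).1) (S i).2 = 0) : Le D m S h = 0 := by
  simp [Le, hS]

lemma Le_eq_one_of_forall {D m : ℕ} (hm : m ≠ 0) {S : Fin m → (Fin D → ℝ) × ℝ}
    {h : (Fin D → ℝ) → ℝ} (hS : ∀ i, loss01 (h (S i).1) (S i).2 = 1) : Le D m S h = 1 := by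
  simp [Le, hS, hm]

section Learner

variable {D m : ℕ} {hstar : (Fin D → ℝ) → ℝ}

lemma alg_apply_of_forall_ne {S : Fin m → (Fin D → ℝ) × ℝ} {x : Fin D → ℝ}
    (hx : ∀ i, x ≠ -(S i).1) : alg D m hstar S x = hstar x :=
  if_neg fun ⟨i, hi⟩ => hx i hi

lemma alg_apply_neg_fst (S : Fin m → (Fin D → ℝ) × ℝ) (i : Fin m) :
    alg D m hstar S (-(S i).1) = -hstar (-(S i).1) :=
  if_pos ⟨i, rfl⟩

lemma Ld_alg_eq_zero [NeZero D] (hmeas : Measurable hstar) (S : Fin m → (Fin D → ℝ) × ℝ) :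
    Ld D hstar (alg D m hstar S) = 0 := by
  have hflip : (Set.range fun i => -(S i).1).Finite := Set.finite_range _
  have hgood : ∀ᵐ z ∂μD D hstar, z.2 = hstar z.1 ∧ z.1 ∉ Set.range fun i => -(S i).1 := by
    refine (ae_map_iff (measurable_id.prodMk hmeas).aemeasurable ?_).2 ?_
    · exact (measurableSet_eq_fun measurable_snd (hmeas.comp measurable_fst)).inter
        (hflip.measurableSet.compl.preimage measurable_fst)
    · filter_upwards [hflip.countable.ae_notMem (stdGaussian D)] with x hx using ⟨rfl, hx⟩
  refine integral_eq_zero_of_ae ?_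
  filter_upwards [hgood] with z ⟨hlabel, hz⟩
  rw [Pi.zero_apply, alg_apply_of_forall_ne fun i h => hz ⟨i, h.symm⟩, hlabel, loss01_self]

lemma ae_Le_alg_eq_zero [NeZero D] (hmeas : Measurable hstar) :
    ∀ᵐ S ∂μS D m hstar, Le D m S (alg D m hstar S) = 0 := by
  have hgood : ∀ᵐ S ∂μS D m hstar,
      ∀ i, (S i).2 = hstar (S i).1 ∧ ∀ j, (S i).1 ≠ -(S j).1 := by
    rw [← (measurePreserving_labelSample hmeas).map_eq]
    refine (ae_map_iff (measurable_labelSample hmeas).aemeasurable ?_).2 ?_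
    · simp only [Set.ofPred_forall, Set.ofPred_and]
      exact .iInter fun i => (measurableSet_eq_fun (by fun_prop) (by fun_prop)).inter
        (.iInter fun j => (measurableSet_eq_fun (by fun_prop) (by fun_prop)).compl)
    · filter_upwards [ae_forall_ne_neg_stdGaussian_pi m] with X hX i using ⟨rfl, hX i⟩
  filter_upwards [hgood] with S hS
  refine Le_eq_zero_of_forall fun i => ?_
  rw [alg_apply_of_forall_ne (hS i).2, (hS i).1, loss01_self]

lemma Le_labelSample_alg_labelSample_neg (hm : m ≠ 0) (hne : ∀ x, hstar x ≠ 0)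
    (X : Fin m → Fin D → ℝ) :
    Le D m (labelSample hstar X) (alg D m hstar (labelSample hstar (-X))) = 1 := by
  refine Le_eq_one_of_forall hm fun i => ?_
  have hflip := alg_apply_neg_fst (hstar := hstar) (labelSample hstar (-X)) i
  simp only [labelSample, Pi.neg_apply, neg_neg] at hflip ⊢
  rw [hflip, loss01_neg_self (hne _)]

lemma exists_labelSample_mem_of_half_lt (hmeas : Measurable hstar)
    {𝒮 : Set (Fin m → (Fin D → ℝ) × ℝ)} (h𝒮 : MeasurableSet 𝒮) (hhalf : 1 / 2 < μS D m hstar 𝒮) :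
    ∃ X, labelSample hstar X ∈ 𝒮 ∧ labelSample hstar (-X) ∈ 𝒮 := by
  have hlabel := measurePreserving_labelSample (m := m) hmeas
  have hneg := measurePreserving_neg_stdGaussian_pi D m
  have hG : MeasurableSet (labelSample hstar ⁻¹' 𝒮) := measurable_labelSample hmeas h𝒮
  -- The preimage and its reflection through the origin each carry more than half of the mass.
  have hsum : (Measure.pi fun _ : Fin m => stdGaussian D) Set.univ <
      (Measure.pi fun _ => stdGaussian D) (labelSample hstar ⁻¹' 𝒮) +
        (Measure.pi fun _ => stdGaussian D) (Neg.neg ⁻¹' (labelSample hstar ⁻¹' 𝒮)) := by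
    rw [hneg.measure_preimage hG.nullMeasurableSet, hlabel.measure_preimage h𝒮.nullMeasurableSet,
      measure_univ, ← ENNReal.add_halves 1]
    exact ENNReal.add_lt_add hhalf hhalf
  obtain ⟨X, hX, hnegX⟩ :=
    nonempty_inter_of_measure_lt_add _ (hneg.measurable hG) (Set.subset_univ _)
      (Set.subset_univ _) hsum
  exact ⟨X, hX, hnegX⟩

lemma genErr_eq_zero [NeZero D] (hmeas : Measurable hstar) {δ : ℝ} (hδ : 0 ≤ δ) :
    genErr D m hstar δ = 0 := by
  have := isProbabilityMeasure_μS (m := m) hmeas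
  refine IsLeast.csInf_eq ⟨⟨le_rfl, ?_⟩, fun ε hε => hε.1⟩
  rw [measure_setOf_eq_one_of_ae]
  · exact ENNReal.ofReal_le_one.2 (by linarith)
  · filter_upwards [ae_Le_alg_eq_zero hmeas] with S hS
    rw [hS, Ld_alg_eq_zero hmeas, sub_zero]

lemma unifAlg_eq_one [NeZero D] (hm : m ≠ 0) (hmeas : Measurable hstar)
    (hne : ∀ x, hstar x ≠ 0) {δ : ℝ} (hδ₀ : 0 ≤ δ) (hδ : δ < 1 / 2) :
    unifAlg D m hstar δ = 1 := by
  have := isProbabilityMeasure_μS (m := m) hmeas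
  refine IsLeast.csInf_eq ⟨⟨zero_le_one, Set.univ, .univ, ?_, fun S _ S' _ => ?_⟩, ?_⟩
  · rw [measure_univ]
    exact ENNReal.ofReal_le_one.2 (by linarith)
  · rw [Ld_alg_eq_zero hmeas, zero_sub, abs_neg, abs_of_nonneg (Le_nonneg _ _)]
    exact Le_le_one _ _
  · rintro ε ⟨-, 𝒮, h𝒮, hμ, hbound⟩
    have hhalf : 1 / 2 < ENNReal.ofReal (1 - δ) :=
      (ENNReal.lt_ofReal_iff_toReal_lt (by norm_num)).2 (by norm_num; linarith)
    obtain ⟨X, hX, hnegX⟩ := exists_labelSample_mem_of_half_lt hmeas h𝒮 (hhalf.trans_le hμ)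
    simpa [Ld_alg_eq_zero hmeas, Le_labelSample_alg_labelSample_neg hm hne] using
      hbound _ hX _ hnegX

end Learner

/-- abstract setup of the paper: the learner that flips
`h*` exactly on the negated training inputs has, almost surely, zero empirical
and zero test 0-1 error (so `ε_gen(m,δ) = 0` for all `δ ∈ (0,1)`), while the
tightest algorithm-dependent uniform convergence bound equals `1` for every
`δ ∈ (0,1/2)`. -/
theorem abstract_failure_of_uniform_convergence
    (D m : ℕ) (hD : 1 ≤ D) (hm : 1 ≤ m)
    (hstar : (Fin D → ℝ) → ℝ) (hmeas : Measurable hstar)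
    (hrange : ∀ x, hstar x = 1 ∨ hstar x = -1) :
    (μS D m hstar
        {S | Le D m S (alg D m hstar S) = 0 ∧ Ld D hstar (alg D m hstar S) = 0}
      = 1) ∧
    (∀ δ : ℝ, 0 < δ → δ < 1 → genErr D m hstar δ = 0) ∧
    (∀ δ : ℝ, 0 < δ → δ < 1/2 → unifAlg D m hstar δ = 1) := by
  have : NeZero D := ⟨by omega⟩
  have := isProbabilityMeasure_μS (m := m) hmeas
  have hne : ∀ x, hstar x ≠ 0 := fun x => by rcases hrange x with h | h <;> simp [h]
  refine ⟨measure_setOf_eq_one_of_ae ?_, fun δ hδ _ => genErr_eq_zero hmeas hδ.le,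
    fun δ hδ₀ hδ => unifAlg_eq_one (by omega) hmeas hne hδ₀.le hδ⟩
  filter_upwards [ae_Le_alg_eq_zero hmeas] with S hS
  exact ⟨hS, Ld_alg_eq_zero hmeas S⟩

end AbstractSetup
end
end
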